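/- arXiv:1609.06193 — 12 statements merged into one kernel-verified Lean document; each statement's English description precedes it below -/
import Mathlib

section
/- Let ε ≥ 0 be a real number. The two roots x₁ = (−ε − √(ε(ε+4)))/2 and x₂ = (−ε + √(ε(ε+4)))/2 of the characteristic polynomial x² + εx − ε are real, and both satisfy |x₁| < 1 and |x₂| < 1 if and only if ε < 1/2. -/
/-- The roots x₁, x₂ of the characteristic polynomial x² + εx − ε (consumption model
with price memory) are real, and both have absolute value less than 1 iff ε < 1/2. -/
theorem stmt_0 (ε : ℝ) (hε : 0 ≤ ε)
    (x₁ x₂ : ℝ)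
    (hx₁ : x₁ = (-ε - Real.sqrt (ε * (ε + 4))) / 2)
    (hx₂ : x₂ = (-ε + Real.sqrt (ε * (ε + 4))) / 2) :
    x₁ ^ 2 + ε * x₁ - ε = 0 ∧ x₂ ^ 2 + ε * x₂ - ε = 0 ∧
      ((|x₁| < 1 ∧ |x₂| < 1) ↔ ε < 1 / 2) := by
  set s := Real.sqrt (ε * (ε + 4)) with hs
  have hsnn : 0 ≤ s := Real.sqrt_nonneg _
  have hs2 : s ^ 2 = ε * (ε + 4) := Real.sq_sqrt (by nlinarith)
  have hsge : ε ≤ s := by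
    nlinarith [Real.sqrt_le_sqrt (show ε * ε ≤ ε * (ε + 4) by nlinarith),
      Real.sqrt_mul_self hε]
  have hsle : s ≤ ε + 2 := by nlinarith
  have hx1le : x₁ ≤ 0 := by rw [hx₁]; nlinarith
  have hx2ge : 0 ≤ x₂ := by rw [hx₂]; nlinarith
  refine ⟨by rw [hx₁]; nlinarith, by rw [hx₂]; nlinarith, ?_⟩
  have hx2lt : |x₂| < 1 := by
    rw [abs_of_nonneg hx2ge, hx₂]
    nlinarith
  constructor
  · rintro ⟨h1, -⟩
    rw [abs_of_nonpos hx1le, hx₁] at h1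
    nlinarith
  · intro h
    refine ⟨?_, hx2lt⟩
    rw [abs_of_nonpos hx1le, hx₁]
    have : s < 2 - ε := by nlinarith
    nlinarith
end

section
/- Let α > 0, β > 0, set ε := α/β, and let d be a real number. If 0 ≤ ε < 1/2, then every real sequence (λ_k) satisfying λ_{k+2} = −ε λ_{k+1} + ε λ_k + 2αd for all k ∈ ℕ converges to the equilibrium price 2αd as k → ∞. -/
/-- Under the price-memory consumption model with constant demand, if 0 ≤ ε = α/β < 1/2
then every solution of the price recurrence converges to the equilibrium price 2αd. -/
theorem stmt_1 (α β d ε : ℝ) (hα : 0 < α) (hβ : 0 < β) (hε : ε = α / β)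
    (hε0 : 0 ≤ ε) (hε1 : ε < 1 / 2)
    (lam : ℕ → ℝ)
    (hrec : ∀ k : ℕ, lam (k + 2) = -ε * lam (k + 1) + ε * lam k + 2 * α * d) :
    Filter.Tendsto lam Filter.atTop (nhds (2 * α * d)) := by
  set e : ℕ → ℝ := fun k => lam k - 2 * α * d with he
  have herec : ∀ k, e (k + 2) = -ε * e (k + 1) + ε * e k := by
    intro k
    simp only [he]
    rw [hrec k]
    ring
  set r : ℝ := Real.sqrt ((2 * ε + 1) / 2) with hr
  have hr0 : 0 < r := Real.sqrt_pos.mpr (by linarith)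
  have hr2 : r ^ 2 = (2 * ε + 1) / 2 := by
    rw [hr, sq, Real.mul_self_sqrt (by linarith)]
  have hr1 : r < 1 := by
    nlinarith [hr2, hr0]
  have h2e : 2 * ε < r ^ 2 := by rw [hr2]; linarith
  set C : ℝ := max |e 0| (|e 1| / r) with hC
  have hC0 : 0 ≤ C := le_trans (abs_nonneg _) (le_max_left _ _)
  have key : ∀ k, |e k| ≤ C * r ^ k ∧ |e (k + 1)| ≤ C * r ^ (k + 1) := by
    intro k
    induction k with
    | zero =>
      constructor
      · rw [pow_zero, mul_one]; exact le_max_left _ _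
      · have : |e 1| / r ≤ C := le_max_right _ _
        calc |e 1| = |e 1| / r * r := by field_simp
          _ ≤ C * r := by exact mul_le_mul_of_nonneg_right this hr0.le
          _ = C * r ^ 1 := by ring
    | succ n ih =>
      refine ⟨ih.2, ?_⟩
      have h1 := ih.1
      have h2 := ih.2
      have : |e (n + 2)| ≤ ε * |e (n + 1)| + ε * |e n| := by
        rw [herec n]
        calc |(-ε * e (n + 1) + ε * e n)| ≤ |(-ε * e (n + 1))| + |ε * e n| := abs_add_le _ _
          _ = ε * |e (n + 1)| + ε * |e n| := by
            rw [abs_mul, abs_mul, abs_neg, abs_of_nonneg hε0]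
      have hrn : (0:ℝ) ≤ r ^ n := pow_nonneg hr0.le n
      calc |e (n + 2)| ≤ ε * |e (n + 1)| + ε * |e n| := this
        _ ≤ ε * (C * r ^ (n + 1)) + ε * (C * r ^ n) := by
          have := mul_le_mul_of_nonneg_left h2 hε0
          have := mul_le_mul_of_nonneg_left h1 hε0
          linarith [mul_le_mul_of_nonneg_left h2 hε0, mul_le_mul_of_nonneg_left h1 hε0]
        _ = ε * C * r ^ n * (r + 1) := by ring
        _ ≤ ε * C * r ^ n * 2 := by
          have hεC : 0 ≤ ε * C * r ^ n := by positivity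
          nlinarith [hr1]
        _ ≤ C * r ^ (n + 2) := by
          have : 2 * ε ≤ r ^ 2 := h2e.le
          have hCr : 0 ≤ C * r ^ n := by positivity
          have := mul_le_mul_of_nonneg_left this hCr
          calc ε * C * r ^ n * 2 = C * r ^ n * (2 * ε) := by ring
            _ ≤ C * r ^ n * r ^ 2 := this
            _ = C * r ^ (n + 2) := by ring
  have htend0 : Filter.Tendsto e Filter.atTop (nhds 0) := by
    have hpow : Filter.Tendsto (fun k => C * r ^ k) Filter.atTop (nhds 0) := by
      have := tendsto_pow_atTop_nhds_zero_of_lt_one hr0.le hr1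
      simpa using this.const_mul C
    refine squeeze_zero_norm ?_ hpow
    intro k
    simpa [Real.norm_eq_abs] using (key k).1
  have : Filter.Tendsto (fun k => e k + 2 * α * d) Filter.atTop (nhds (0 + 2 * α * d)) :=
    htend0.add tendsto_const_nhds
  simpa [he] using this
end

section
/- Let α > 0, β > 0, set ε := α/β, and let d be a real number. If ε > 1/2, then there exists a real sequence (λ_k) satisfying λ_{k+2} = −ε λ_{k+1} + ε λ_k + 2αd for all k ∈ ℕ that is unbounded (i.e., for every M there exists k with |λ_k| > M). -/
/-- Under the price-memory consumption model with constant demand, if ε = α/β > 1/2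
then some solution of the price recurrence is unbounded. -/
theorem stmt_2 (α β d ε : ℝ) (hα : 0 < α) (hβ : 0 < β) (hε : ε = α / β)
    (hε1 : 1 / 2 < ε) :
    ∃ lam : ℕ → ℝ,
      (∀ k : ℕ, lam (k + 2) = -ε * lam (k + 1) + ε * lam k + 2 * α * d) ∧
      (∀ M : ℝ, ∃ k : ℕ, M < |lam k|) := by
  have hε0 : (0:ℝ) < ε := lt_trans (by norm_num) hε1
  set s := Real.sqrt (ε^2 + 4*ε) with hs
  have hsnn : 0 ≤ s := Real.sqrt_nonneg _
  have hs2 : s^2 = ε^2 + 4*ε := Real.sq_sqrt (by nlinarith)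
  set r := -(ε + s)/2 with hr
  have hchar : r^2 = -ε * r + ε := by
    rw [hr]; ring_nf; nlinarith [hs2]
  have hspos : 0 < s := Real.sqrt_pos.mpr (by nlinarith)
  have habs : 1 < |r| := by
    have hrneg : r < 0 := by
      rw [hr]; nlinarith
    rw [abs_of_neg hrneg]
    have hsgt : 2 - ε < s := by
      rcases le_or_gt (2 - ε) 0 with h | h
      · linarith
      · nlinarith [hs2]
    rw [hr]; linarith
  refine ⟨fun k => 2*α*d + r^k, fun k => ?_, fun M => ?_⟩
  · show 2*α*d + r^(k+2) = -ε * (2*α*d + r^(k+1)) + ε * (2*α*d + r^k) + 2*α*d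
    have : r^(k+2) = r^k * r^2 := by ring
    rw [this, hchar]; ring
  · obtain ⟨k, hk⟩ := pow_unbounded_of_one_lt (M + |2*α*d|) habs
    refine ⟨k, ?_⟩
    have h1 : |r|^k = |r^k| := (abs_pow r k).symm
    have h2 : |r^k| - |2*α*d| ≤ |2*α*d + r^k| := by
      have := abs_sub_abs_le_abs_sub (r^k) (-(2*α*d))
      simpa [sub_neg_eq_add, add_comm] using this
    calc M = M + |2*α*d| - |2*α*d| := by ring
    _ < |r|^k - |2*α*d| := by linarith
    _ = |r^k| - |2*α*d| := by rw [h1]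
    _ ≤ |2*α*d + r^k| := h2
end

section
/- Let ε ≥ 0, A, and μ be real numbers with D := 1 + (√3 − 1)ε + (2 − √3)ε² ≠ 0, and define e₁ := A(1 + ε(√3 − 1)/2)/D and e₂ := A·ε(1 − √3)/2/D. Then the sequence b_k := μ + e₁·sin((k−5)π/6) + e₂·cos((k−5)π/6) satisfies b_{k+2} + ε·b_{k+1} − ε·b_k = μ + A·sin((k+2−5)π/6) for all k ∈ ℕ. -/
/-!
Undetermined coefficients. Shifting the phase by `θ` rotates the coefficient pair `(e₁, e₂)` of
`e₁ sin x + e₂ cos x`, so the recurrence operator acts on that pair as multiplication by the complex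
number `z = (1 + ε(√3 − 2) + i(√3 + ε))/2`, while the forcing `A sin(x + π/3)` has pair
`A (1 + i√3)/2`. Since `|z|² = D`, the stated `(e₁, e₂)` is the quotient of the two, and the
constant `μ` is fixed by the recurrence because `1 + ε − ε = 1`.
-/

open Real

lemma sin_cos_comb_add (e₁ e₂ x θ : ℝ) :
    e₁ * sin (x + θ) + e₂ * cos (x + θ)
      = (e₁ * cos θ - e₂ * sin θ) * sin x + (e₁ * sin θ + e₂ * cos θ) * cos x := by
  rw [sin_add, cos_add]
  ring

lemma sin_cos_comb_recurrence (ε e₁ e₂ x : ℝ) :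
    (e₁ * sin (x + π / 3) + e₂ * cos (x + π / 3))
        + ε * (e₁ * sin (x + π / 6) + e₂ * cos (x + π / 6)) - ε * (e₁ * sin x + e₂ * cos x)
      = (e₁ * (1 + ε * (√3 - 2)) - e₂ * (√3 + ε)) / 2 * sin x
        + (e₁ * (√3 + ε) + e₂ * (1 + ε * (√3 - 2))) / 2 * cos x := by
  rw [sin_cos_comb_add, sin_cos_comb_add, cos_pi_div_three, sin_pi_div_three,
    cos_pi_div_six, sin_pi_div_six]
  ring

lemma sinusoid_coeffs_solve (ε A D e₁ e₂ : ℝ)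
    (hD : D = 1 + (√3 - 1) * ε + (2 - √3) * ε ^ 2) (hD0 : D ≠ 0)
    (he₁ : e₁ = A * (1 + ε * (√3 - 1) / 2) / D) (he₂ : e₂ = A * ε * (1 - √3) / 2 / D) :
    e₁ * (1 + ε * (√3 - 2)) - e₂ * (√3 + ε) = A ∧
      e₁ * (√3 + ε) + e₂ * (1 + ε * (√3 - 2)) = A * √3 := by
  have h3 : √3 ^ 2 = 3 := sq_sqrt (by norm_num)
  subst he₁ he₂
  constructor <;> field_simp <;> rw [hD]
  · linear_combination A * (ε ^ 2 + ε) * h3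
  · linear_combination A * (ε ^ 2 - ε) * h3

theorem stmt_5_general (ε A μ : ℝ)
    (D e₁ e₂ : ℝ)
    (hD : D = 1 + (Real.sqrt 3 - 1) * ε + (2 - Real.sqrt 3) * ε ^ 2)
    (hD0 : D ≠ 0)
    (he₁ : e₁ = A * (1 + ε * (Real.sqrt 3 - 1) / 2) / D)
    (he₂ : e₂ = A * ε * (1 - Real.sqrt 3) / 2 / D)
    (b : ℕ → ℝ)
    (hb : ∀ k : ℕ, b k = μ + e₁ * Real.sin (((k : ℝ) - 5) * Real.pi / 6)
        + e₂ * Real.cos (((k : ℝ) - 5) * Real.pi / 6)) :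
    ∀ k : ℕ, b (k + 2) + ε * b (k + 1) - ε * b k
      = μ + A * Real.sin (((k : ℝ) + 2 - 5) * Real.pi / 6) := by
  intro k
  rw [hb, hb, hb]
  set x : ℝ := ((k : ℝ) - 5) * π / 6
  have hx₁ : ((k + 1 : ℕ) - 5) * π / 6 = x + π / 6 := by push_cast; ring
  have hx₂ : ((k + 2 : ℕ) - 5) * π / 6 = x + π / 3 := by push_cast; ring
  have hforcing : ((k : ℝ) + 2 - 5) * π / 6 = x + π / 3 := by ring
  obtain ⟨hsin, hcos⟩ := sinusoid_coeffs_solve ε A D e₁ e₂ hD hD0 he₁ he₂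
  have hrec := sin_cos_comb_recurrence ε e₁ e₂ x
  rw [hsin, hcos] at hrec
  have hforcing_sin : sin (x + π / 3) = 1 / 2 * sin x + √3 / 2 * cos x := by
    rw [sin_add, cos_pi_div_three, sin_pi_div_three]
    ring
  rw [hx₁, hx₂, hforcing]
  linear_combination hrec - A * hforcing_sin

/-- The sinusoid b_k = μ + e₁ sin((k−5)π/6) + e₂ cos((k−5)π/6), with the stated
coefficients, is a particular solution of the price recurrence with sinusoidal demand. -/
theorem stmt_5 (ε A μ : ℝ) (hε : 0 ≤ ε)
    (D e₁ e₂ : ℝ)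
    (hD : D = 1 + (Real.sqrt 3 - 1) * ε + (2 - Real.sqrt 3) * ε ^ 2)
    (hD0 : D ≠ 0)
    (he₁ : e₁ = A * (1 + ε * (Real.sqrt 3 - 1) / 2) / D)
    (he₂ : e₂ = A * ε * (1 - Real.sqrt 3) / 2 / D)
    (b : ℕ → ℝ)
    (hb : ∀ k : ℕ, b k = μ + e₁ * Real.sin (((k : ℝ) - 5) * Real.pi / 6)
        + e₂ * Real.cos (((k : ℝ) - 5) * Real.pi / 6)) :
    ∀ k : ℕ, b (k + 2) + ε * b (k + 1) - ε * b k
      = μ + A * Real.sin (((k : ℝ) + 2 - 5) * Real.pi / 6) :=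
  stmt_5_general ε A μ D e₁ e₂ hD hD0 he₁ he₂ b hb
end

section
/- Let ε > 0, A, and μ be real numbers, let x₁ = (−ε − √(ε(ε+4)))/2 and x₂ = (−ε + √(ε(ε+4)))/2 (distinct since ε > 0), let D := 1 + (√3 − 1)ε + (2 − √3)ε², e₁ := A(1 + ε(√3 − 1)/2)/D, e₂ := A·ε(1 − √3)/2/D, and b_k := μ + e₁·sin((k−5)π/6) + e₂·cos((k−5)π/6). Then for every real sequence (λ_k) satisfying λ_{k+2} + ε λ_{k+1} − ε λ_k = μ + A·sin((k+2−5)π/6) for all k ∈ ℕ, there exist unique real constants c₁ and c₂ such that λ_k = c₁·x₁^k + c₂·x₂^k + b_k for all k ∈ ℕ. -/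
/-- Every solution of the price recurrence with sinusoidal demand has the closed form
λ_k = c₁x₁^k + c₂x₂^k + b_k for unique constants c₁, c₂, where x₁, x₂ are the
characteristic roots and b_k the particular sinusoidal solution. -/
theorem stmt_6 (ε A μ : ℝ) (hε : 0 < ε)
    (x₁ x₂ : ℝ)
    (hx₁ : x₁ = (-ε - Real.sqrt (ε * (ε + 4))) / 2)
    (hx₂ : x₂ = (-ε + Real.sqrt (ε * (ε + 4))) / 2)
    (D e₁ e₂ : ℝ)
    (hD : D = 1 + (Real.sqrt 3 - 1) * ε + (2 - Real.sqrt 3) * ε ^ 2)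
    (he₁ : e₁ = A * (1 + ε * (Real.sqrt 3 - 1) / 2) / D)
    (he₂ : e₂ = A * ε * (1 - Real.sqrt 3) / 2 / D)
    (b : ℕ → ℝ)
    (hb : ∀ k : ℕ, b k = μ + e₁ * Real.sin (((k : ℝ) - 5) * Real.pi / 6)
        + e₂ * Real.cos (((k : ℝ) - 5) * Real.pi / 6))
    (lam : ℕ → ℝ)
    (hrec : ∀ k : ℕ, lam (k + 2) + ε * lam (k + 1) - ε * lam k
        = μ + A * Real.sin (((k : ℝ) + 2 - 5) * Real.pi / 6)) :
    ∃! c : ℝ × ℝ, ∀ k : ℕ, lam k = c.1 * x₁ ^ k + c.2 * x₂ ^ k + b k := by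
  have hs2 : Real.sqrt (ε * (ε + 4)) ^ 2 = ε * (ε + 4) :=
    Real.sq_sqrt (by nlinarith)
  have hs_pos : 0 < Real.sqrt (ε * (ε + 4)) :=
    Real.sqrt_pos.2 (by nlinarith)
  have hx12 : x₁ ≠ x₂ := by
    rw [hx₁, hx₂]; intro h; nlinarith
  have hd : x₁ - x₂ ≠ 0 := sub_ne_zero.2 hx12
  have hr1 : x₁ ^ 2 + ε * x₁ - ε = 0 := by
    rw [hx₁]; linear_combination hs2 / 4
  have hr2 : x₂ ^ 2 + ε * x₂ - ε = 0 := by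
    rw [hx₂]; linear_combination hs2 / 4
  have h3 : Real.sqrt 3 ^ 2 = 3 := Real.sq_sqrt (by norm_num)
  have h3nn : 0 ≤ Real.sqrt 3 := Real.sqrt_nonneg 3
  have h3gt : 1 < Real.sqrt 3 := by nlinarith
  have h3lt : Real.sqrt 3 < 2 := by nlinarith
  have hDpos : 0 < D := by rw [hD]; nlinarith
  have hDne : D ≠ 0 := ne_of_gt hDpos
  -- coefficient identities
  have hE1 : e₁ * D = A * (1 + ε * (Real.sqrt 3 - 1) / 2) := by
    rw [he₁]; field_simp
  have hE2 : e₂ * D = A * ε * (1 - Real.sqrt 3) / 2 := by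
    rw [he₂]; field_simp
  have h1 : e₁ / 2 - e₂ * Real.sqrt 3 / 2 + ε * (e₁ * Real.sqrt 3 / 2 - e₂ / 2)
      - ε * e₁ = A / 2 := by
    refine mul_right_cancel₀ hDne ?_
    linear_combination (1 / 2 + ε * Real.sqrt 3 / 2 - ε) * hE1
      + (-(Real.sqrt 3) / 2 - ε / 2) * hE2 - (A / 2) * hD
      + (A * (ε + ε ^ 2) / 4) * h3
  have h2 : e₁ * Real.sqrt 3 / 2 + e₂ / 2 + ε * (e₁ / 2 + e₂ * Real.sqrt 3 / 2)
      - ε * e₂ = A * Real.sqrt 3 / 2 := by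
    refine mul_right_cancel₀ hDne ?_
    linear_combination (Real.sqrt 3 / 2 + ε / 2) * hE1
      + (1 / 2 + ε * Real.sqrt 3 / 2 - ε) * hE2 - (A * Real.sqrt 3 / 2) * hD
      + (A * (ε ^ 2 - ε) / 4) * h3
  -- particular solution satisfies the recurrence
  have hbrec : ∀ k : ℕ, b (k + 2) + ε * b (k + 1) - ε * b k
      = μ + A * Real.sin (((k : ℝ) + 2 - 5) * Real.pi / 6) := by
    intro k
    have e2' : (((k : ℕ) + 2 : ℕ) : ℝ) - 5 = (k : ℝ) - 5 + 2 := by push_cast; ring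
    rw [hb, hb, hb]
    push_cast
    have a1 : ((k : ℝ) + 1 - 5) * Real.pi / 6
        = ((k : ℝ) - 5) * Real.pi / 6 + Real.pi / 6 := by ring
    have a2 : ((k : ℝ) + 2 - 5) * Real.pi / 6
        = ((k : ℝ) - 5) * Real.pi / 6 + Real.pi / 3 := by ring
    rw [a1, a2, Real.sin_add, Real.cos_add, Real.sin_add, Real.cos_add,
      Real.sin_pi_div_six, Real.cos_pi_div_six, Real.sin_pi_div_three,
      Real.cos_pi_div_three]
    linear_combination Real.sin (((k : ℝ) - 5) * Real.pi / 6) * h1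
      + Real.cos (((k : ℝ) - 5) * Real.pi / 6) * h2
  -- initial constants
  set L0 := lam 0 - b 0 with hL0
  set L1 := lam 1 - b 1 with hL1
  set c₁ := (L1 - L0 * x₂) / (x₁ - x₂) with hc₁
  set c₂ := (L0 * x₁ - L1) / (x₁ - x₂) with hc₂
  have h0 : lam 0 = c₁ * x₁ ^ 0 + c₂ * x₂ ^ 0 + b 0 := by
    rw [hc₁, hc₂]; field_simp; ring
  have h1' : lam 1 = c₁ * x₁ ^ 1 + c₂ * x₂ ^ 1 + b 1 := by
    rw [hc₁, hc₂]; field_simp; ring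
  have main : ∀ k : ℕ, lam k = c₁ * x₁ ^ k + c₂ * x₂ ^ k + b k
      ∧ lam (k + 1) = c₁ * x₁ ^ (k + 1) + c₂ * x₂ ^ (k + 1) + b (k + 1) := by
    intro k
    induction k with
    | zero => exact ⟨h0, h1'⟩
    | succ n ih =>
      refine ⟨ih.2, ?_⟩
      have hr := hrec n
      have hbr := hbrec n
      linear_combination hr - hbr + ε * ih.1 - ε * ih.2
        - (c₁ * x₁ ^ n) * hr1 - (c₂ * x₂ ^ n) * hr2
  refine ⟨(c₁, c₂), fun k => (main k).1, ?_⟩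
  rintro ⟨p, q⟩ hc
  have hA0 : p + q = c₁ + c₂ := by
    have := (hc 0).symm.trans (main 0).1
    simpa using this
  have hA1 : p * x₁ + q * x₂ = c₁ * x₁ + c₂ * x₂ := by
    have := (hc 1).symm.trans (main 1).1
    simpa using this
  have hp : p = c₁ := by
    have hz : (p - c₁) * (x₁ - x₂) = 0 := by linear_combination hA1 - x₂ * hA0
    rcases mul_eq_zero.1 hz with h | h
    · linarith [sub_eq_zero.1 h]
    · exact absurd h hd
  have hq : q = c₂ := by
    have hz : (q - c₂) * (x₂ - x₁) = 0 := by linear_combination hA1 - x₁ * hA0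
    rcases mul_eq_zero.1 hz with h | h
    · linarith [sub_eq_zero.1 h]
    · exact absurd (by linarith : x₁ - x₂ = 0) hd
  simp [hp, hq]
end

section
/- Let 0 ≤ ε < 1/2, A > 0, and μ be real numbers, and define D := 1 + (√3 − 1)ε + (2 − √3)ε², e₁ := A(1 + ε(√3 − 1)/2)/D, and e₂ := A·ε(1 − √3)/2/D. Then for every real sequence (λ_k) satisfying λ_{k+2} + ε λ_{k+1} − ε λ_k = μ + A·sin((k+2−5)π/6) for all k ∈ ℕ, the difference λ_k − L_k converges to 0 as k → ∞, where L_k := μ + √(e₁² + e₂²)·sin((k−5)π/6 + π/3 + arctan((e₂ − √3·e₁)/(√3·e₂ + e₁))). -/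
/-!
The difference of two solutions of the recurrence solves the homogeneous recurrence
`d (k + 2) = ε (d k - d (k + 1))`, so `|d (k + 2)| ≤ 2ε max (|d k|, |d (k + 1)|)`; for `ε < 1/2`
this is a contraction and every homogeneous solution tends to `0`. It therefore suffices that
`L` itself solves the recurrence. Rotating `(e₁, e₂)` by `-π/3` and applying harmonic addition
shows `L k = μ + e₁ sin θₖ + e₂ cos θₖ` with `θₖ = (k - 5)π/6`, and such a sinusoid solves the
recurrence exactly when `(e₁, e₂)` solves a `2 × 2` linear system, whose solution by Cramer's
rule is the given one.
-/

open Real Filter Topology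

theorem tendsto_zero_of_norm_le_mul_max {E : Type*} [SeminormedAddCommGroup E] {d : ℕ → E}
    {q : ℝ} (hq0 : 0 ≤ q) (hq1 : q < 1) (hd : ∀ k, ‖d (k + 2)‖ ≤ q * max ‖d k‖ ‖d (k + 1)‖) :
    Tendsto d atTop (𝓝 0) := by
  set M : ℕ → ℝ := fun k => max ‖d k‖ ‖d (k + 1)‖
  have hM0 : ∀ k, 0 ≤ M k := fun k => (norm_nonneg _).trans (le_max_left _ _)
  have hM_anti : Antitone M := antitone_nat_of_succ_le fun k =>
    max_le (le_max_right _ _) ((hd k).trans (by nlinarith [hM0 k]))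
  have hM_two : ∀ k, M (k + 2) ≤ q * M k := fun k =>
    max_le (hd k) ((hd (k + 1)).trans (mul_le_mul_of_nonneg_left (hM_anti k.le_succ) hq0))
  -- the limit `m` of the antitone sequence `M` satisfies `m ≤ q * m`, which forces `m = 0`
  obtain ⟨m, hm⟩ : ∃ m, Tendsto M atTop (𝓝 m) :=
    ⟨_, tendsto_atTop_ciInf hM_anti ⟨0, by rintro _ ⟨k, rfl⟩; exact hM0 k⟩⟩
  have hm_le : m ≤ q * m :=
    le_of_tendsto_of_tendsto ((tendsto_add_atTop_iff_nat 2).2 hm) (hm.const_mul q)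
      (Eventually.of_forall hM_two)
  have hm_nonneg : 0 ≤ m := ge_of_tendsto' hm hM0
  obtain rfl : m = 0 := by nlinarith
  exact squeeze_zero_norm (fun k => le_max_left _ _) hm

theorem tendsto_zero_of_add_smul_sub_smul_eq_zero {E : Type*} [SeminormedAddCommGroup E]
    [NormedSpace ℝ E] {ε : ℝ} (hε0 : 0 ≤ ε) (hε1 : ε < 1 / 2) {d : ℕ → E}
    (hd : ∀ k, d (k + 2) + ε • d (k + 1) - ε • d k = 0) :
    Tendsto d atTop (𝓝 0) := by
  refine tendsto_zero_of_norm_le_mul_max (q := 2 * ε) (by linarith) (by linarith) fun k => ?_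
  have hk : d (k + 2) = ε • (d k - d (k + 1)) := by
    rw [smul_sub, ← sub_eq_zero, ← hd k]; abel
  calc ‖d (k + 2)‖ = ε * ‖d k - d (k + 1)‖ := by rw [hk, norm_smul, Real.norm_of_nonneg hε0]
    _ ≤ ε * (‖d k‖ + ‖d (k + 1)‖) := by gcongr; exact norm_sub_le _ _
    _ ≤ 2 * ε * max ‖d k‖ ‖d (k + 1)‖ := by
      nlinarith [le_max_left ‖d k‖ ‖d (k + 1)‖, le_max_right ‖d k‖ ‖d (k + 1)‖]

theorem sqrt_sq_add_sq_mul_sin_add_arctan {a : ℝ} (ha : 0 < a) (b y : ℝ) :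
    √(a ^ 2 + b ^ 2) * sin (y + arctan (b / a)) = a * sin y + b * cos y := by
  have hsqrt : √(1 + (b / a) ^ 2) = √(a ^ 2 + b ^ 2) / a := by
    rw [div_pow, one_add_div (by positivity), sqrt_div' _ (sq_nonneg a), sqrt_sq ha.le]
  have hR : 0 < √(a ^ 2 + b ^ 2) := sqrt_pos.2 (by positivity)
  rw [sin_add, sin_arctan, cos_arctan, hsqrt]
  field_simp

theorem sqrt_mul_sin_add_pi_div_three_add_arctan {e₁ e₂ : ℝ} (h : 0 < √3 * e₂ + e₁) (x : ℝ) :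
    √(e₁ ^ 2 + e₂ ^ 2) * sin (x + π / 3 + arctan ((e₂ - √3 * e₁) / (√3 * e₂ + e₁))) =
      e₁ * sin x + e₂ * cos x := by
  have h3 : √3 ^ 2 = 3 := sq_sqrt (by norm_num)
  -- `(e₁, e₂)` rotated by `-π/3` is `((√3 e₂ + e₁) / 2, (e₂ - √3 e₁) / 2)`, of the same norm
  have key := sqrt_sq_add_sq_mul_sin_add_arctan (a := (√3 * e₂ + e₁) / 2) (by positivity)
    ((e₂ - √3 * e₁) / 2) (x + π / 3)
  rw [div_div_div_cancel_right₀ two_ne_zero,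
    show ((√3 * e₂ + e₁) / 2) ^ 2 + ((e₂ - √3 * e₁) / 2) ^ 2 = e₁ ^ 2 + e₂ ^ 2 by
      linear_combination (e₁ ^ 2 + e₂ ^ 2) / 4 * h3] at key
  rw [key, sin_add, cos_add, sin_pi_div_three, cos_pi_div_three]
  linear_combination (e₁ * sin x + e₂ * cos x) / 4 * h3

noncomputable def sinusoid (μ e₁ e₂ : ℝ) (k : ℕ) : ℝ :=
  μ + e₁ * sin (((k : ℝ) - 5) * π / 6) + e₂ * cos (((k : ℝ) - 5) * π / 6)

theorem sinusoid_recurrence {ε A μ e₁ e₂ : ℝ}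
    (hs : e₁ - √3 * e₂ + ε * ((√3 - 2) * e₁ - e₂) = A)
    (hc : √3 * e₁ + e₂ + ε * (e₁ + (√3 - 2) * e₂) = √3 * A) (k : ℕ) :
    sinusoid μ e₁ e₂ (k + 2) + ε * sinusoid μ e₁ e₂ (k + 1) - ε * sinusoid μ e₁ e₂ k =
      μ + A * sin (((k : ℝ) + 2 - 5) * π / 6) := by
  have h1 : (((k + 1 : ℕ) : ℝ) - 5) * π / 6 = ((k : ℝ) - 5) * π / 6 + π / 6 := by
    push_cast; ring
  have h2 : (((k + 2 : ℕ) : ℝ) - 5) * π / 6 = ((k : ℝ) - 5) * π / 6 + π / 3 := by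
    push_cast; ring
  have h2' : ((k : ℝ) + 2 - 5) * π / 6 = ((k : ℝ) - 5) * π / 6 + π / 3 := by ring
  simp only [sinusoid, h1, h2, h2', sin_add, cos_add, sin_pi_div_six, cos_pi_div_six,
    sin_pi_div_three, cos_pi_div_three]
  linear_combination sin (((k : ℝ) - 5) * π / 6) / 2 * hs + cos (((k : ℝ) - 5) * π / 6) / 2 * hc

theorem sqrt_three_quadratic_pos (ε : ℝ) : 0 < 1 + (√3 - 1) * ε + (2 - √3) * ε ^ 2 := by
  have h3 : √3 ^ 2 = 3 := sq_sqrt (by norm_num)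
  have h1 : √3 < 2 := by nlinarith [sqrt_nonneg 3]
  -- the discriminant `(√3 - 1)² - 4 (2 - √3) = 2√3 - 4` is negative
  nlinarith [sq_nonneg (2 * (2 - √3) * ε + (√3 - 1))]

section Coefficients

variable {ε A D e₁ e₂ : ℝ} (hD : D = 1 + (√3 - 1) * ε + (2 - √3) * ε ^ 2)
  (he₁ : e₁ = A * (1 + ε * (√3 - 1) / 2) / D) (he₂ : e₂ = A * ε * (1 - √3) / 2 / D)
include hD he₁ he₂

theorem coeffs_sinusoid_system :
    e₁ - √3 * e₂ + ε * ((√3 - 2) * e₁ - e₂) = A ∧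
      √3 * e₁ + e₂ + ε * (e₁ + (√3 - 2) * e₂) = √3 * A := by
  have h3 : √3 ^ 2 = 3 := sq_sqrt (by norm_num)
  have hD0 : D ≠ 0 := (hD ▸ sqrt_three_quadratic_pos ε).ne'
  have hE₁ : e₁ * D = A * (1 + ε * (√3 - 1) / 2) := by rw [he₁, div_mul_cancel₀ _ hD0]
  have hE₂ : e₂ * D = A * ε * (1 - √3) / 2 := by rw [he₂, div_mul_cancel₀ _ hD0]
  constructor <;> apply mul_right_cancel₀ hD0
  · linear_combination (1 + ε * (√3 - 2)) * hE₁ - (√3 + ε) * hE₂ - A * hD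
      + A * (ε + ε ^ 2) / 2 * h3
  · linear_combination (√3 + ε) * hE₁ + (1 + ε * (√3 - 2)) * hE₂ - √3 * A * hD
      + A * (ε ^ 2 - ε) / 2 * h3

theorem sqrt_three_mul_coeff_add_coeff_pos (hε0 : 0 ≤ ε) (hε1 : ε < 1 / 2) (hA : 0 < A) :
    0 < √3 * e₂ + e₁ := by
  have h3 : √3 ^ 2 = 3 := sq_sqrt (by norm_num)
  have h1 : 1 < √3 := by nlinarith [sqrt_nonneg 3]
  have hDpos : 0 < D := hD ▸ sqrt_three_quadratic_pos ε
  have hmul : (√3 * e₂ + e₁) * D = A * (1 + ε * (√3 - 2)) := by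
    rw [add_mul, mul_assoc, he₁, he₂, div_mul_cancel₀ _ hDpos.ne', div_mul_cancel₀ _ hDpos.ne']
    linear_combination -ε * A / 2 * h3
  exact (mul_pos_iff_of_pos_right hDpos).1 (hmul ▸ mul_pos hA (by nlinarith))

end Coefficients

/-- For 0 ≤ ε < 1/2, every solution of the price recurrence with sinusoidal demand
converges to the limiting sinusoid L_k. -/
theorem stmt_8 (ε A μ : ℝ) (hε0 : 0 ≤ ε) (hε1 : ε < 1 / 2) (hA : 0 < A)
    (D e₁ e₂ : ℝ)
    (hD : D = 1 + (Real.sqrt 3 - 1) * ε + (2 - Real.sqrt 3) * ε ^ 2)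
    (he₁ : e₁ = A * (1 + ε * (Real.sqrt 3 - 1) / 2) / D)
    (he₂ : e₂ = A * ε * (1 - Real.sqrt 3) / 2 / D)
    (lam : ℕ → ℝ)
    (hrec : ∀ k : ℕ, lam (k + 2) + ε * lam (k + 1) - ε * lam k
        = μ + A * Real.sin (((k : ℝ) + 2 - 5) * Real.pi / 6))
    (L : ℕ → ℝ)
    (hL : ∀ k : ℕ, L k = μ + Real.sqrt (e₁ ^ 2 + e₂ ^ 2) *
        Real.sin (((k : ℝ) - 5) * Real.pi / 6 + Real.pi / 3 +
          Real.arctan ((e₂ - Real.sqrt 3 * e₁) / (Real.sqrt 3 * e₂ + e₁)))) :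
    Filter.Tendsto (fun k => lam k - L k) Filter.atTop (nhds 0) := by
  obtain ⟨hs, hc⟩ := coeffs_sinusoid_system hD he₁ he₂
  have hphase := sqrt_three_mul_coeff_add_coeff_pos hD he₁ he₂ hε0 hε1 hA
  have hL_eq : L = sinusoid μ e₁ e₂ := funext fun k => by
    rw [hL k, sqrt_mul_sin_add_pi_div_three_add_arctan hphase, sinusoid, add_assoc]
  refine tendsto_zero_of_add_smul_sub_smul_eq_zero hε0 hε1 fun k => ?_
  simp only [hL_eq, smul_eq_mul]
  linear_combination hrec k - sinusoid_recurrence hs hc k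
end

section
/- Let α > 0, γ > 0, ρ ≥ 0 be real numbers and set Ṽ := 1/(2γ). Suppose real sequences (u_k), (λ_k), (d_k) satisfy, for every k ≥ 1, the consumption rule u_k = (d_k + Ṽ·(λ_{k−1} − λ_k + 2ρ(d_k − d_{k−1} + u_{k−1}))) / (1 + 2ρṼ) and the ex-ante pricing rule λ_{k+1} = 2α·u_k (for every k ≥ 0). Then for every k ≥ 1, λ_{k+1} = ((ρ − α)/(γ + ρ))·λ_k + (α/(γ + ρ))·λ_{k−1} + 2α·d_k − (2αρ/(γ + ρ))·d_{k−1}. -/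
/-- Eliminating consumption from the memory-based consumption rule and the ex-ante
pricing rule λ_{k+1} = 2αu_k yields the price difference equation of the model with
price and consumption memory. -/
theorem stmt_11 (α γ ρ : ℝ) (hα : 0 < α) (hγ : 0 < γ) (hρ : 0 ≤ ρ)
    (V : ℝ) (hV : V = 1 / (2 * γ))
    (u lam d : ℕ → ℝ)
    (hcons : ∀ k : ℕ, u (k + 1) = (d (k + 1) +
        V * (lam k - lam (k + 1) + 2 * ρ * (d (k + 1) - d k + u k))) /
      (1 + 2 * ρ * V))
    (hprice : ∀ k : ℕ, lam (k + 1) = 2 * α * u k) :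
    ∀ k : ℕ, lam (k + 2) = ((ρ - α) / (γ + ρ)) * lam (k + 1)
      + (α / (γ + ρ)) * lam k + 2 * α * d (k + 1)
      - (2 * α * ρ / (γ + ρ)) * d k := by
  intro k
  have h1 := hcons k
  have h2 := hprice (k + 1)
  have h3 := hprice k
  have huk : u k = lam (k + 1) / (2 * α) := by
    rw [h3]; field_simp
  have hγρ : γ + ρ ≠ 0 := by positivity
  have hden : 1 + 2 * ρ * V ≠ 0 := by
    rw [hV]
    have : (0:ℝ) < 1 + 2 * ρ * (1 / (2 * γ)) := by positivity
    linarith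
  rw [show k + 2 = (k + 1) + 1 from rfl, h2, h1, huk, hV] at *
  field_simp
  ring
end

section
/- Let α > 0, γ > 0, ρ ≥ 0 be real numbers. The two roots x₁ = (ρ − α − √((ρ−α)² + 4α(γ+ρ)))/(2(γ+ρ)) and x₂ = (ρ − α + √((ρ−α)² + 4α(γ+ρ)))/(2(γ+ρ)) of the characteristic polynomial x² − ((ρ−α)/(γ+ρ))x − α/(γ+ρ) are real, and both satisfy |x₁| < 1 and |x₂| < 1 if and only if ρ > α − γ/2. In particular, if 0 ≤ α < γ/2 then both roots have absolute value less than 1 for every ρ ≥ 0. -/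
/-!
Write `q x = (γ + ρ) x² - (ρ - α) x - α`, so that the characteristic polynomial is `q / (γ + ρ)` and
`q x = (γ + ρ) (x - x₁) (x - x₂)`. Since `q 0 = -α < 0`, the roots satisfy `x₁ < 0 < x₂`; hence
`x₂ < 1` iff `q 1 > 0` and `-1 < x₁` iff `q (-1) > 0`. Now `q 1 = γ > 0` always, while
`q (-1) = γ + 2ρ - 2α`, which is positive exactly when `ρ > α - γ/2`.
-/

namespace Quadratic

variable {A B C s : ℝ}

theorem eq_mul_sub_mul_sub (hA : A ≠ 0) (hs : s ^ 2 = B ^ 2 + 4 * A * C) (x : ℝ) :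
    A * x ^ 2 - B * x - C = A * (x - (B - s) / (2 * A)) * (x - (B + s) / (2 * A)) := by
  field_simp
  linear_combination hs

theorem normalized_eq_zero (hA : A ≠ 0) {x : ℝ} (hx : A * x ^ 2 - B * x - C = 0) :
    x ^ 2 - B / A * x - C / A = 0 := by
  field_simp
  linear_combination hx

theorem abs_lt_sqrt_discrim (hAC : 0 < A * C) (hs₀ : 0 ≤ s) (hs : s ^ 2 = B ^ 2 + 4 * A * C) :
    |B| < s :=
  abs_lt_of_sq_lt_sq (by linarith) hs₀

end Quadratic

theorem mul_sub_mul_sub_pos_iff_right {A r₁ r₂ t : ℝ} (hA : 0 < A) (ht : r₁ < t) :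
    0 < A * (t - r₁) * (t - r₂) ↔ r₂ < t := by
  rw [mul_pos_iff_of_pos_left (mul_pos hA (sub_pos.mpr ht)), sub_pos]

theorem mul_sub_mul_sub_pos_iff_left {A r₁ r₂ t : ℝ} (hA : 0 < A) (ht : t < r₂) :
    0 < A * (t - r₁) * (t - r₂) ↔ t < r₁ := by
  rw [show A * (t - r₁) * (t - r₂) = A * (r₂ - t) * (r₁ - t) by ring,
    mul_pos_iff_of_pos_left (mul_pos hA (sub_pos.mpr ht)), sub_pos]

/-- The roots x₁, x₂ of the characteristic polynomial x² − ((ρ−α)/(γ+ρ))x − α/(γ+ρ)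
(price and consumption memory model) are real, and both have absolute value less than 1
iff ρ > α − γ/2. In particular, if α < γ/2 both roots have absolute value less than 1. -/
theorem stmt_12 (α γ ρ : ℝ) (hα : 0 < α) (hγ : 0 < γ) (hρ : 0 ≤ ρ)
    (x₁ x₂ : ℝ)
    (hx₁ : x₁ = (ρ - α - Real.sqrt ((ρ - α) ^ 2 + 4 * α * (γ + ρ))) / (2 * (γ + ρ)))
    (hx₂ : x₂ = (ρ - α + Real.sqrt ((ρ - α) ^ 2 + 4 * α * (γ + ρ))) / (2 * (γ + ρ))) :
    (x₁ ^ 2 - ((ρ - α) / (γ + ρ)) * x₁ - α / (γ + ρ) = 0) ∧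
    (x₂ ^ 2 - ((ρ - α) / (γ + ρ)) * x₂ - α / (γ + ρ) = 0) ∧
    ((|x₁| < 1 ∧ |x₂| < 1) ↔ α - γ / 2 < ρ) ∧
    (α < γ / 2 → |x₁| < 1 ∧ |x₂| < 1) := by
  have hc : 0 < γ + ρ := by linarith
  have hs : √((ρ - α) ^ 2 + 4 * α * (γ + ρ)) ^ 2 = (ρ - α) ^ 2 + 4 * (γ + ρ) * α := by
    rw [Real.sq_sqrt (by positivity)]
    ring
  have hs₀ := Real.sqrt_nonneg ((ρ - α) ^ 2 + 4 * α * (γ + ρ))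
  generalize √((ρ - α) ^ 2 + 4 * α * (γ + ρ)) = s at hx₁ hx₂ hs hs₀
  have hq (x : ℝ) : (γ + ρ) * x ^ 2 - (ρ - α) * x - α = (γ + ρ) * (x - x₁) * (x - x₂) := by
    rw [hx₁, hx₂]
    exact Quadratic.eq_mul_sub_mul_sub hc.ne' hs x
  obtain ⟨hsB, hBs⟩ := abs_lt.mp (Quadratic.abs_lt_sqrt_discrim (mul_pos hc hα) hs₀ hs)
  have hx₁_neg : x₁ < 0 := hx₁ ▸ div_neg_of_neg_of_pos (by linarith) (by linarith)
  have hx₂_pos : 0 < x₂ := hx₂ ▸ div_pos (by linarith) (by linarith)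
  have hx₂_lt : x₂ < 1 :=
    (mul_sub_mul_sub_pos_iff_right (r₂ := x₂) hc (by linarith : x₁ < 1)).mp (by rw [← hq]; linarith)
  have hx₁_gt : -1 < x₁ ↔ α - γ / 2 < ρ := by
    rw [← mul_sub_mul_sub_pos_iff_left (r₁ := x₁) hc (by linarith : -1 < x₂), ← hq]
    constructor <;> intro h <;> linarith
  have habs : |x₁| < 1 ∧ |x₂| < 1 ↔ -1 < x₁ := by
    simp only [abs_lt]
    constructor
    · exact fun h => h.1.1
    · exact fun h => ⟨⟨h, by linarith⟩, ⟨by linarith, hx₂_lt⟩⟩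
  refine ⟨Quadratic.normalized_eq_zero hc.ne' ?_, Quadratic.normalized_eq_zero hc.ne' ?_,
    habs.trans hx₁_gt, fun h => (habs.trans hx₁_gt).mpr (by linarith)⟩
  · rw [hq]; ring
  · rw [hq]; ring
end

section
/- Let α > 0, γ > 0, ρ ≥ 0 be real numbers and define x₁ := (ρ − α − √((ρ−α)² + 4α(γ+ρ)))/(2(γ+ρ)). Then x₁ = −1 if and only if ρ = α − γ/2, and x₁ > −1 if and only if ρ > α − γ/2. -/
/-- The smaller characteristic root x₁ equals −1 iff ρ = α − γ/2, and exceeds −1 iff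
ρ > α − γ/2. -/
theorem stmt_14 (α γ ρ : ℝ) (hα : 0 < α) (hγ : 0 < γ) (hρ : 0 ≤ ρ)
    (x₁ : ℝ)
    (hx₁ : x₁ = (ρ - α - Real.sqrt ((ρ - α) ^ 2 + 4 * α * (γ + ρ))) / (2 * (γ + ρ))) :
    (x₁ = -1 ↔ ρ = α - γ / 2) ∧ (-1 < x₁ ↔ α - γ / 2 < ρ) := by
  have hγρ : 0 < γ + ρ := by linarith
  set D : ℝ := (ρ - α) ^ 2 + 4 * α * (γ + ρ) with hD
  have hD0 : 0 < D := by positivity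
  set s := Real.sqrt D with hsdef
  have hs0 : 0 ≤ s := Real.sqrt_nonneg _
  have hs2 : s ^ 2 = D := Real.sq_sqrt hD0.le
  set B : ℝ := ρ - α + 2 * (γ + ρ) with hB
  have key : B ^ 2 - D = 4 * (γ + ρ) * (2 * ρ - 2 * α + γ) := by rw [hD, hB]; ring
  have h2 : (2 : ℝ) * (γ + ρ) ≠ 0 := by positivity
  have hxeq : x₁ = -1 ↔ s = B := by
    rw [hx₁, div_eq_iff h2]
    constructor <;> intro h <;> [linarith; linarith]
  have hxlt : -1 < x₁ ↔ s < B := by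
    rw [hx₁, lt_div_iff₀ (by positivity : (0:ℝ) < 2 * (γ + ρ))]
    constructor <;> intro h <;> [linarith; linarith]
  constructor
  · rw [hxeq]
    constructor
    · intro h
      have : B ^ 2 = D := by rw [← h, hs2]
      have hfac : 4 * (γ + ρ) * (2 * ρ - 2 * α + γ) = 0 := by linarith [key]
      have : 2 * ρ - 2 * α + γ = 0 := by
        rcases mul_eq_zero.mp hfac with h1 | h1
        · exfalso; nlinarith
        · exact h1
      linarith
    · intro h
      have hBD : B ^ 2 = D := by nlinarith [key]
      have hBpos : 0 < B := by rw [hB]; linarith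
      nlinarith [hs2, hs0]
  · rw [hxlt]
    constructor
    · intro h
      have hsq : s ^ 2 < B ^ 2 := by nlinarith
      have : 0 < 4 * (γ + ρ) * (2 * ρ - 2 * α + γ) := by nlinarith [key, hs2]
      nlinarith
    · intro h
      have hBpos : 0 < B := by rw [hB]; linarith
      have : s ^ 2 < B ^ 2 := by nlinarith [key, hs2]
      nlinarith
end

section
/- Let α > 0 and γ > 0 be real numbers. The function ρ ↦ x₁(ρ) := (ρ − α − √((ρ−α)² + 4α(γ+ρ)))/(2(γ+ρ)) is monotonically nondecreasing on [0, ∞). -/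
/-- The smaller characteristic root x₁(ρ) is monotonically nondecreasing in the
deviation-penalty weight ρ on [0, ∞). -/
theorem stmt_15 (α γ : ℝ) (hα : 0 < α) (hγ : 0 < γ) :
    MonotoneOn
      (fun ρ : ℝ =>
        (ρ - α - Real.sqrt ((ρ - α) ^ 2 + 4 * α * (γ + ρ))) / (2 * (γ + ρ)))
      (Set.Ici (0 : ℝ)) := by
  intro ρ₁ h₁ ρ₂ h₂ h12
  simp only [Set.mem_Ici] at h₁ h₂
  set S₁ := Real.sqrt ((ρ₁ - α) ^ 2 + 4 * α * (γ + ρ₁)) with hS1def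
  set S₂ := Real.sqrt ((ρ₂ - α) ^ 2 + 4 * α * (γ + ρ₂)) with hS2def
  have hc₁ : (0:ℝ) < γ + ρ₁ := by linarith
  have hc₂ : (0:ℝ) < γ + ρ₂ := by linarith
  have hS1sq : S₁ ^ 2 = (ρ₁ - α) ^ 2 + 4 * α * (γ + ρ₁) := by
    rw [hS1def]; exact Real.sq_sqrt (by nlinarith [sq_nonneg (ρ₁ - α)])
  have hS2sq : S₂ ^ 2 = (ρ₂ - α) ^ 2 + 4 * α * (γ + ρ₂) := by
    rw [hS2def]; exact Real.sq_sqrt (by nlinarith [sq_nonneg (ρ₂ - α)])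
  have hS1nn : 0 ≤ S₁ := Real.sqrt_nonneg _
  have hS2nn : 0 ≤ S₂ := Real.sqrt_nonneg _
  have hD1 : 0 < ρ₁ - α + S₁ := by nlinarith [sq_nonneg (S₁ - (α - ρ₁))]
  have hD2 : 0 < ρ₂ - α + S₂ := by nlinarith [sq_nonneg (S₂ - (α - ρ₂))]
  have hSle : S₁ ≤ S₂ := by
    rw [hS1def, hS2def]
    exact Real.sqrt_le_sqrt (by nlinarith)
  have key₁ : (ρ₁ - α - S₁) * (ρ₁ - α + S₁) = -(4 * α * (γ + ρ₁)) := by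
    linear_combination (-1 : ℝ) * hS1sq
  have key₂ : (ρ₂ - α - S₂) * (ρ₂ - α + S₂) = -(4 * α * (γ + ρ₂)) := by
    linear_combination (-1 : ℝ) * hS2sq
  simp only
  have eq₁ : (ρ₁ - α - S₁) / (2 * (γ + ρ₁)) = -(2 * α) / (ρ₁ - α + S₁) := by
    rw [div_eq_div_iff (by positivity) hD1.ne']
    linear_combination key₁
  have eq₂ : (ρ₂ - α - S₂) / (2 * (γ + ρ₂)) = -(2 * α) / (ρ₂ - α + S₂) := by
    rw [div_eq_div_iff (by positivity) hD2.ne']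
    linear_combination key₂
  rw [← hS1def, ← hS2def, eq₁, eq₂, div_le_div_iff₀ hD1 hD2]
  nlinarith [hSle, h12, hα]
end

section
/- Let α > 0, γ > 0, ρ ≥ 0 be real numbers with ρ > α − γ/2, and let d be a real number. Then every real sequence (λ_k) satisfying λ_{k+2} = ((ρ−α)/(γ+ρ))·λ_{k+1} + (α/(γ+ρ))·λ_k + (2αγ/(γ+ρ))·d for all k ∈ ℕ converges to the equilibrium price 2αd as k → ∞. -/
/-!
The deviation `e k = λ_k - 2αd` from the equilibrium satisfies the homogeneous recurrence
`e (k+2) = a e (k+1) + b e k` with `a = (ρ-α)/(γ+ρ)`, `b = α/(γ+ρ)`, and the condition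
`ρ > α - γ/2` is exactly what makes `|a| + |b| < 1`. For such a recurrence,
`t = (1 + |a| + |b|)/2 < 1` satisfies `|a| t + |b| ≤ t²`, so `‖e k‖ ≤ C tᵏ` by a two-step induction.
-/

open Filter Topology

section TwoStep

variable {E : Type*} [SeminormedAddCommGroup E]

theorem norm_le_geometric_of_norm_two_step_le {e : ℕ → E} {p q t C : ℝ}
    (hp : 0 ≤ p) (hq : 0 ≤ q) (ht : 0 ≤ t) (hpqt : p * t + q ≤ t ^ 2)
    (h0 : ‖e 0‖ ≤ C) (h1 : ‖e 1‖ ≤ C * t)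
    (he : ∀ k, ‖e (k + 2)‖ ≤ p * ‖e (k + 1)‖ + q * ‖e k‖) (k : ℕ) :
    ‖e k‖ ≤ C * t ^ k := by
  have hC : 0 ≤ C := (norm_nonneg _).trans h0
  suffices ∀ k, ‖e k‖ ≤ C * t ^ k ∧ ‖e (k + 1)‖ ≤ C * t ^ (k + 1) from (this k).1
  intro k
  induction k with
  | zero => simpa using ⟨h0, h1⟩
  | succ k ih =>
    refine ⟨ih.2, ?_⟩
    calc ‖e (k + 2)‖ ≤ p * ‖e (k + 1)‖ + q * ‖e k‖ := he k
      _ ≤ p * (C * t ^ (k + 1)) + q * (C * t ^ k) := by gcongr; exacts [ih.2, ih.1]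
      _ = C * t ^ k * (p * t + q) := by ring
      _ ≤ C * t ^ k * t ^ 2 := by gcongr
      _ = C * t ^ (k + 2) := by ring

theorem tendsto_zero_of_norm_two_step_le {e : ℕ → E} {p q : ℝ}
    (hp : 0 ≤ p) (hq : 0 ≤ q) (hpq : p + q < 1)
    (he : ∀ k, ‖e (k + 2)‖ ≤ p * ‖e (k + 1)‖ + q * ‖e k‖) :
    Tendsto e atTop (𝓝 0) := by
  -- `p t + q ≤ p + q ≤ ((1 + p + q)/2)²` by AM-GM
  obtain ⟨t, ht0, ht1, hpqt⟩ : ∃ t : ℝ, 0 < t ∧ t < 1 ∧ p * t + q ≤ t ^ 2 :=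
    ⟨(1 + (p + q)) / 2, by positivity, by linarith, by
      nlinarith [sq_nonneg (1 - (p + q)), mul_nonneg hp (by linarith : 0 ≤ 1 - (1 + (p + q)) / 2)]⟩
  set C := max ‖e 0‖ (‖e 1‖ / t)
  have h1 : ‖e 1‖ ≤ C * t := (div_le_iff₀ ht0).1 (le_max_right _ _)
  have hbound := norm_le_geometric_of_norm_two_step_le hp hq ht0.le hpqt (le_max_left _ _) h1 he
  have hgeom : Tendsto (fun k => C * t ^ k) atTop (𝓝 0) := by
    simpa using (tendsto_pow_atTop_nhds_zero_of_lt_one ht0.le ht1).const_mul C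
  exact squeeze_zero_norm hbound hgeom

theorem tendsto_zero_of_linear_two_step {𝕜 : Type*} [NormedField 𝕜] [NormedSpace 𝕜 E]
    {e : ℕ → E} {a b : 𝕜} (hab : ‖a‖ + ‖b‖ < 1)
    (he : ∀ k, e (k + 2) = a • e (k + 1) + b • e k) :
    Tendsto e atTop (𝓝 0) := by
  refine tendsto_zero_of_norm_two_step_le (norm_nonneg a) (norm_nonneg b) hab fun k => ?_
  rw [he k, ← norm_smul, ← norm_smul]
  exact norm_add_le _ _

end TwoStep

theorem abs_div_add_abs_div_lt_one {α γ ρ : ℝ} (hα : 0 < α) (hγ : 0 < γ)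
    (hstab : α - γ / 2 < ρ) :
    |(ρ - α) / (γ + ρ)| + |α / (γ + ρ)| < 1 := by
  have hγρ : 0 < γ + ρ := by linarith
  rw [abs_div, abs_div, abs_of_pos hγρ, abs_of_pos hα, ← add_div, div_lt_one hγρ]
  cases abs_cases (ρ - α) <;> linarith

theorem stmt_17_general (α γ ρ d : ℝ) (hα : 0 < α) (hγ : 0 < γ)
    (hstab : α - γ / 2 < ρ)
    (lam : ℕ → ℝ)
    (hrec : ∀ k : ℕ, lam (k + 2) = ((ρ - α) / (γ + ρ)) * lam (k + 1)
        + (α / (γ + ρ)) * lam k + (2 * α * γ / (γ + ρ)) * d) :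
    Filter.Tendsto lam Filter.atTop (nhds (2 * α * d)) := by
  have hγρ : γ + ρ ≠ 0 := by linarith
  rw [← tendsto_sub_nhds_zero_iff]
  refine tendsto_zero_of_linear_two_step (a := (ρ - α) / (γ + ρ)) (b := α / (γ + ρ)) ?_ fun k => ?_
  · simpa only [Real.norm_eq_abs] using abs_div_add_abs_div_lt_one hα hγ hstab
  · rw [hrec k, smul_eq_mul, smul_eq_mul]
    field_simp
    ring

/-- Under the price-and-consumption-memory model with constant demand, if
ρ > α − γ/2 then every solution of the price recurrence converges to the
equilibrium price 2αd. -/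
theorem stmt_17 (α γ ρ d : ℝ) (hα : 0 < α) (hγ : 0 < γ) (hρ : 0 ≤ ρ)
    (hstab : α - γ / 2 < ρ)
    (lam : ℕ → ℝ)
    (hrec : ∀ k : ℕ, lam (k + 2) = ((ρ - α) / (γ + ρ)) * lam (k + 1)
        + (α / (γ + ρ)) * lam k + (2 * α * γ / (γ + ρ)) * d) :
    Filter.Tendsto lam Filter.atTop (nhds (2 * α * d)) :=
  stmt_17_general α γ ρ d hα hγ hstab lam hrec
end

section
/- Let α > 0, γ > 0 be real numbers and 0 ≤ ρ < α − γ/2, and let d be a real number. Then there exists a real sequence (λ_k) satisfying λ_{k+2} = ((ρ−α)/(γ+ρ))·λ_{k+1} + (α/(γ+ρ))·λ_k + (2αγ/(γ+ρ))·d for all k ∈ ℕ that is unbounded (i.e., for every M there exists k with |λ_k| > M). -/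
/-- Under the price-and-consumption-memory model with constant demand, if
0 ≤ ρ < α − γ/2 then some solution of the price recurrence is unbounded. -/
theorem stmt_18 (α γ ρ d : ℝ) (hα : 0 < α) (hγ : 0 < γ) (hρ : 0 ≤ ρ)
    (hunstab : ρ < α - γ / 2) :
    ∃ lam : ℕ → ℝ,
      (∀ k : ℕ, lam (k + 2) = ((ρ - α) / (γ + ρ)) * lam (k + 1)
        + (α / (γ + ρ)) * lam k + (2 * α * γ / (γ + ρ)) * d) ∧
      (∀ M : ℝ, ∃ k : ℕ, M < |lam k|) := by
  have hs : (0:ℝ) < γ + ρ := by linarith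
  set a : ℝ := (ρ - α) / (γ + ρ) with ha
  set b : ℝ := α / (γ + ρ) with hb
  have hbpos : 0 < b := div_pos hα hs
  have hba : b - a > 1 := by
    rw [hb, ha, gt_iff_lt, ← sub_div, lt_div_iff₀ hs]; linarith
  have h1 : (a + b) * (2 * α * d) + (2 * α * γ / (γ + ρ)) * d = 2 * α * d := by
    rw [ha, hb]; field_simp; ring
  clear_value a b
  have hD : (0:ℝ) ≤ a ^ 2 + 4 * b := by nlinarith [sq_nonneg a]
  set s : ℝ := Real.sqrt (a ^ 2 + 4 * b) with hsdef
  have hsq : s ^ 2 = a ^ 2 + 4 * b := Real.sq_sqrt hD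
  have hsgt : a + 2 < s := by
    have hgt : a ^ 2 + 4 * b > (a + 2) ^ 2 := by nlinarith
    rcases le_or_gt (a + 2) 0 with h | h
    · calc a + 2 ≤ 0 := h
        _ < s := Real.sqrt_pos.2 (by nlinarith [sq_nonneg (a + 2)])
    · have := Real.sqrt_lt_sqrt (by positivity) hgt
      rwa [Real.sqrt_sq h.le] at this
  clear_value s
  set r : ℝ := (a - s) / 2 with hr
  have hchar : r ^ 2 = a * r + b := by rw [hr]; nlinarith [hsq]
  have hrlt : r < -1 := by rw [hr]; linarith
  have hrabs : 1 < |r| := by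
    rw [abs_of_neg (by linarith : r < 0)]; linarith
  refine ⟨fun k => 2 * α * d + r ^ k, fun k => ?_, fun M => ?_⟩
  · have h2 : r ^ (k + 2) = a * r ^ (k + 1) + b * r ^ k := by
      have h3 : r ^ (k + 2) = r ^ k * r ^ 2 := by ring
      rw [h3, hchar]; ring
    show 2 * α * d + r ^ (k + 2) =
        a * (2 * α * d + r ^ (k + 1)) + b * (2 * α * d + r ^ k)
          + (2 * α * γ / (γ + ρ)) * d
    rw [h2]; linarith [h1]
  · obtain ⟨k, hk⟩ := pow_unbounded_of_one_lt (M + |2 * α * d|) hrabs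
    refine ⟨k, ?_⟩
    have h1 : |r| ^ k = |r ^ k| := (abs_pow r k).symm
    have h2 : |r ^ k| - |2 * α * d| ≤ |2 * α * d + r ^ k| := by
      have h3 := abs_sub_abs_le_abs_sub (r ^ k) (-(2 * α * d))
      simp only [abs_neg] at h3
      calc |r ^ k| - |2 * α * d| ≤ |r ^ k - -(2 * α * d)| := h3
        _ = |2 * α * d + r ^ k| := by ring_nf
    calc M = M + |2 * α * d| - |2 * α * d| := by ring
      _ < |r ^ k| - |2 * α * d| := by rw [← h1]; linarith
      _ ≤ |2 * α * d + r ^ k| := h2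
end
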